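/- Exact active-set prediction: let ψ_p = inf over primal optimal solutions x* of min{x*_i : x*_i > 0} and assume ψ_p > 0. Set C = ψ_p/2 and fix λ with 0 < ‖λ‖ < min(1, ψ_p/(16 max(τ_p,τ_d))). Let (x,y,s) ∈ N̄(γ,λ) with μ_λ < min(1, (ψ_p/(4 max(τ_p,τ_d) C₂))²). Then there exists an optimal solution (x*,y*,s*) of the original QP such that {i : x_i < C} = {i : x*_i = 0}. -/

import Mathlib

/-
Under the size restrictions on `μ_λ` and `‖λ‖`, the proximity radius `max(τ_p, τ_d) · proxBound`
drops below `ψ_p / 2`, so every `xᵢ` lies within `ψ_p / 2` of `x*ᵢ`. Since each entry of an optimal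
`x*` is either `0` or at least `ψ_p`, the threshold `ψ_p / 2` separates the two cases.
-/

open Matrix

/-- Euclidean norm of a finite real vector. -/
noncomputable def enorm {ι : Type*} [Fintype ι] (v : ι → ℝ) : ℝ :=
  Real.sqrt (∑ i, v i ^ 2)

/-- Perturbed duality measure `μ_λ = (x+λ)ᵀ(s+λ)/n`. -/
noncomputable def muLam {n : ℕ} (lam x s : Fin n → ℝ) : ℝ :=
  (∑ i, (x i + lam i) * (s i + lam i)) / n

/-- Membership in the symmetric neighbourhood `N̄(γ, λ)` of the perturbed
central path. -/
def InSymNbhd {m n : ℕ} (H : Matrix (Fin n) (Fin n) ℝ)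
    (A : Matrix (Fin m) (Fin n) ℝ) (b : Fin m → ℝ) (c : Fin n → ℝ)
    (γ : ℝ) (lam x s : Fin n → ℝ) (y : Fin m → ℝ) : Prop :=
  A.mulVec x = b ∧ Aᵀ.mulVec y + s - H.mulVec x = c ∧
  (∀ i, 0 < x i + lam i) ∧ (∀ i, 0 < s i + lam i) ∧
  ∀ i, γ * muLam lam x s ≤ (x i + lam i) * (s i + lam i) ∧
    (x i + lam i) * (s i + lam i) ≤ muLam lam x s / γ

/-- The KKT conditions of the original QP. -/
def KKT {m n : ℕ} (H : Matrix (Fin n) (Fin n) ℝ) (A : Matrix (Fin m) (Fin n) ℝ)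
    (b : Fin m → ℝ) (c : Fin n → ℝ)
    (xs : Fin n → ℝ) (ys : Fin m → ℝ) (ss : Fin n → ℝ) : Prop :=
  A.mulVec xs = b ∧ Aᵀ.mulVec ys + ss - H.mulVec xs = c ∧
  (∀ i, xs i * ss i = 0) ∧ 0 ≤ xs ∧ 0 ≤ ss

/-- `C₂ = √(n/γ) + n`. -/
noncomputable def C2 (n : ℕ) (γ : ℝ) : ℝ := Real.sqrt (n / γ) + n

/-- The proximity bound `C₂ √μ_λ max(√μ_λ, 1) + 4‖λ‖ max(‖λ‖, 1)`. -/
noncomputable def proxBound {n : ℕ} (γ : ℝ) (lam x s : Fin n → ℝ) : ℝ :=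
  C2 n γ * Real.sqrt (muLam lam x s) * max (Real.sqrt (muLam lam x s)) 1
    + 4 * _root_.enorm lam * max (_root_.enorm lam) 1

lemma abs_apply_le_enorm {ι : Type*} [Fintype ι] (v : ι → ℝ) (i : ι) :
    |v i| ≤ _root_.enorm v := by
  rw [_root_.enorm, ← Real.sqrt_sq_eq_abs]
  exact Real.sqrt_le_sqrt (Finset.single_le_sum (fun j _ => sq_nonneg (v j)) (Finset.mem_univ i))

lemma enorm_nonneg {ι : Type*} [Fintype ι] (v : ι → ℝ) : 0 ≤ _root_.enorm v :=
  Real.sqrt_nonneg _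

lemma C2_nonneg (n : ℕ) (γ : ℝ) : 0 ≤ C2 n γ :=
  add_nonneg (Real.sqrt_nonneg _) n.cast_nonneg

lemma proxBound_nonneg {n : ℕ} (γ : ℝ) (lam x s : Fin n → ℝ) : 0 ≤ proxBound γ lam x s := by
  unfold proxBound
  have := C2_nonneg n γ
  have := enorm_nonneg lam
  positivity

lemma proxBound_eq_of_le_one {n : ℕ} {γ : ℝ} {lam x s : Fin n → ℝ}
    (hmu : muLam lam x s ≤ 1) (hlam : _root_.enorm lam ≤ 1) :
    proxBound γ lam x s = C2 n γ * √(muLam lam x s) + 4 * _root_.enorm lam := by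
  have hsqrt : √(muLam lam x s) ≤ 1 := Real.sqrt_le_one.mpr hmu
  rw [proxBound, max_eq_right hsqrt, max_eq_right hlam, mul_one, mul_one]

lemma mul_sqrt_lt_of_lt_sq_div {a μ ψ : ℝ} (ha : 0 ≤ a) (hψ : 0 < ψ) (hμ : μ < (ψ / a) ^ 2) :
    a * √μ < ψ := by
  rcases ha.eq_or_lt with rfl | ha
  · simpa using hψ
  have hsqrt : √μ < ψ / a := (Real.sqrt_lt' (by positivity)).mpr hμ
  calc a * √μ < a * (ψ / a) := mul_lt_mul_of_pos_left hsqrt ha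
    _ = ψ := by field_simp

lemma mul_proxBound_lt_half {n : ℕ} {γ τ ψ : ℝ} {lam x s : Fin n → ℝ} (hτ : 0 < τ) (hψ : 0 < ψ)
    (hlam : _root_.enorm lam < min 1 (ψ / (16 * τ)))
    (hmu : muLam lam x s < min 1 ((ψ / (4 * τ * C2 n γ)) ^ 2)) :
    τ * proxBound γ lam x s < ψ / 2 := by
  rw [lt_min_iff] at hlam hmu
  rw [proxBound_eq_of_le_one hmu.1.le hlam.1.le]
  have hcentral : 4 * τ * C2 n γ * √(muLam lam x s) < ψ :=
    mul_sqrt_lt_of_lt_sq_div (by have := C2_nonneg n γ; positivity) hψ hmu.2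
  have hperturb : 16 * τ * _root_.enorm lam < ψ := by
    have := (lt_div_iff₀' (by positivity)).mp hlam.2
    linarith
  linarith

lemma sInf_pos_KKT_entries_le {m n : ℕ} {H : Matrix (Fin n) (Fin n) ℝ}
    {A : Matrix (Fin m) (Fin n) ℝ} {b : Fin m → ℝ} {c : Fin n → ℝ}
    {xs : Fin n → ℝ} {ys : Fin m → ℝ} {ss : Fin n → ℝ} (hK : KKT H A b c xs ys ss)
    {j : Fin n} (hj : 0 < xs j) :
    sInf {v : ℝ | ∃ (xs : Fin n → ℝ) (ys : Fin m → ℝ) (ss : Fin n → ℝ)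
      (i : Fin n), KKT H A b c xs ys ss ∧ 0 < xs i ∧ v = xs i} ≤ xs j := by
  refine csInf_le ⟨0, ?_⟩ ⟨xs, ys, ss, j, hK, hj, rfl⟩
  rintro _ ⟨_, _, _, _, _, hpos, rfl⟩
  exact hpos.le

lemma setOf_lt_half_eq_setOf_eq_zero {ι : Type*} {x xs : ι → ℝ} {ψ : ℝ} (hxs : 0 ≤ xs)
    (hgap : ∀ i, 0 < xs i → ψ ≤ xs i) (hclose : ∀ i, |x i - xs i| < ψ / 2) :
    {i | x i < ψ / 2} = {i | xs i = 0} := by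
  ext i
  have hi := abs_lt.mp (hclose i)
  simp only [Set.mem_ofPred_eq]
  constructor
  · intro hxi
    by_contra hne
    have := hgap i ((hxs i).lt_of_ne' hne)
    linarith
  · intro hzero
    linarith [hzero ▸ hi.2]

theorem exact_active_set_prediction_general {m n : ℕ}
    (H : Matrix (Fin n) (Fin n) ℝ) (A : Matrix (Fin m) (Fin n) ℝ)
    (b : Fin m → ℝ) (c : Fin n → ℝ)
    (γ : ℝ)
    (τp τd : ℝ)
    (ψp : ℝ)
    (hψp : ψp = sInf {v : ℝ | ∃ (xs : Fin n → ℝ) (ys : Fin m → ℝ) (ss : Fin n → ℝ)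
      (i : Fin n), KKT H A b c xs ys ss ∧ 0 < xs i ∧ v = xs i})
    (hψppos : 0 < ψp)
    (lam : Fin n → ℝ)
    (hlamub : _root_.enorm lam < min 1 (ψp / (16 * max τp τd)))
    (x : Fin n → ℝ) (s : Fin n → ℝ)
    (hmu : muLam lam x s < min 1 ((ψp / (4 * max τp τd * C2 n γ)) ^ 2))
    (hprox : ∃ (xs : Fin n → ℝ) (ys : Fin m → ℝ) (ss : Fin n → ℝ),
      KKT H A b c xs ys ss ∧
      _root_.enorm (x - xs) < τp * proxBound γ lam x s ∧
      _root_.enorm (s - ss) < τd * proxBound γ lam x s) :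
    ∃ (xs : Fin n → ℝ) (ys : Fin m → ℝ) (ss : Fin n → ℝ),
      KKT H A b c xs ys ss ∧
      {i : Fin n | x i < ψp / 2} = {i : Fin n | xs i = 0} := by
  obtain ⟨xs, ys, ss, hK, hxnear, -⟩ := hprox
  refine ⟨xs, ys, ss, hK, setOf_lt_half_eq_setOf_eq_zero hK.2.2.2.1
    (fun j hj => hψp ▸ sInf_pos_KKT_entries_le hK hj) fun i => ?_⟩
  have hτ : 0 < max τp τd := by
    have := (enorm_nonneg lam).trans_lt (lt_min_iff.mp hlamub).2
    exact pos_of_mul_pos_right ((div_pos_iff_of_pos_left hψppos).mp this) (by norm_num)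
  calc |x i - xs i| ≤ _root_.enorm (x - xs) := abs_apply_le_enorm (x - xs) i
    _ < τp * proxBound γ lam x s := hxnear
    _ ≤ max τp τd * proxBound γ lam x s :=
      mul_le_mul_of_nonneg_right (le_max_left _ _) (proxBound_nonneg γ lam x s)
    _ < ψp / 2 := mul_proxBound_lt_half hτ hψppos hlamub hmu

/-- Exact active-set prediction: let `ψ_p` be the infimum, over primal optimal
solutions `x*` and indices `i` with `x*ᵢ > 0`, of `x*ᵢ`; assume `ψ_p > 0`.
Set `C = ψ_p/2`, fix `λ` with `0 < ‖λ‖ < min(1, ψ_p/(16 max(τ_p,τ_d)))`, and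
let `(x,y,s) ∈ N̄(γ,λ)` with `μ_λ < min(1, (ψ_p/(4 max(τ_p,τ_d) C₂))²)`.
Then there is an optimal solution `(x*,y*,s*)` of the original QP with
`{i : xᵢ < C} = {i : x*ᵢ = 0}`. -/
theorem exact_active_set_prediction {m n : ℕ}
    (H : Matrix (Fin n) (Fin n) ℝ) (A : Matrix (Fin m) (Fin n) ℝ)
    (b : Fin m → ℝ) (c : Fin n → ℝ) (hH : H.PosSemidef)
    (γ : ℝ) (hγ : γ ∈ Set.Ioo (0 : ℝ) 1)
    (τp τd : ℝ) (hτp : 0 < τp) (hτd : 0 < τd)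
    (ψp : ℝ)
    (hψp : ψp = sInf {v : ℝ | ∃ (xs : Fin n → ℝ) (ys : Fin m → ℝ) (ss : Fin n → ℝ)
      (i : Fin n), KKT H A b c xs ys ss ∧ 0 < xs i ∧ v = xs i})
    (hψppos : 0 < ψp)
    (lam : Fin n → ℝ) (hlam : 0 ≤ lam) (hlam0 : 0 < _root_.enorm lam)
    (hlamub : _root_.enorm lam < min 1 (ψp / (16 * max τp τd)))
    (x : Fin n → ℝ) (y : Fin m → ℝ) (s : Fin n → ℝ)
    (hmem : InSymNbhd H A b c γ lam x s y)
    (hmu : muLam lam x s < min 1 ((ψp / (4 * max τp τd * C2 n γ)) ^ 2))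
    (hprox : ∃ (xs : Fin n → ℝ) (ys : Fin m → ℝ) (ss : Fin n → ℝ),
      KKT H A b c xs ys ss ∧
      _root_.enorm (x - xs) < τp * proxBound γ lam x s ∧
      _root_.enorm (s - ss) < τd * proxBound γ lam x s) :
    ∃ (xs : Fin n → ℝ) (ys : Fin m → ℝ) (ss : Fin n → ℝ),
      KKT H A b c xs ys ss ∧
      {i : Fin n | x i < ψp / 2} = {i : Fin n | xs i = 0} :=
  exact_active_set_prediction_general H A b c γ τp τd ψp hψp hψppos lam hlamub x s hmu hprox
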